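/- arXiv:2512.02354 — 7 statements merged into one kernel-verified Lean document; each statement's English description precedes it below -/
import Mathlib

section
/- Let μ be a Borel probability measure on ℝ whose support is an interval S with nonempty interior, let φ : ℝ → ℝ be μ-integrable, continuous, and strictly increasing on S, let p be an interior point of S, and let B ∈ ℝ. Then the following are equivalent: (i) B = φ(p); (ii) for every measurable function x : ℝ → [0,1], ∫ (φ(v) − B)·𝟙[v ≥ p] dμ(v) ≥ ∫ (φ(v) − B)·x(v) dμ(v). -/
/-!
If `B = φ p`, monotonicity of `φ` on the support makes `φ v - B` nonpositive below `p` and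
nonnegative above it, so the threshold allocation pointwise maximizes `(φ v - B) * x v` over
`x v ∈ [0, 1]` (the bathtub principle). Conversely, if `B ≠ φ p`, continuity at the interior
point `p` gives an interval next to `p`, of positive measure, on which `φ - B` has the sign of
`φ p - B`; moving the threshold across that interval strictly increases the objective.
-/

open MeasureTheory Set Topology

theorem MeasureTheory.Integrable.mul_of_mem_Icc {α : Type*} [MeasurableSpace α] {μ : Measure α}
    {f x : α → ℝ} (hf : Integrable f μ)
    (hx : AEStronglyMeasurable x μ) (hx01 : ∀ v, x v ∈ Icc (0 : ℝ) 1) :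
    Integrable (fun v => f v * x v) μ :=
  hf.mul_bdd (c := 1) hx <| ae_of_all _ fun v => by
    rw [Real.norm_eq_abs, abs_le]
    exact ⟨by linarith [(hx01 v).1], (hx01 v).2⟩

section Threshold

variable {μ : Measure ℝ} {f : ℝ → ℝ}

theorem ite_le_mem_Icc (a v : ℝ) : (if a ≤ v then (1 : ℝ) else 0) ∈ Icc (0 : ℝ) 1 := by
  split_ifs <;> simp

theorem measurable_ite_le (a : ℝ) : Measurable fun v : ℝ => if a ≤ v then (1 : ℝ) else 0 :=
  measurable_const.ite measurableSet_Ici measurable_const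

theorem integral_mul_ite_le_eq_setIntegral_Ici (a : ℝ) :
    ∫ v, f v * (if a ≤ v then (1 : ℝ) else 0) ∂μ = ∫ v in Ici a, f v ∂μ := by
  rw [← integral_indicator measurableSet_Ici]
  congr 1 with v
  by_cases h : a ≤ v <;> simp [indicator, h]

theorem integral_mul_ite_le_sub_integral_mul_ite_le (hf : Integrable f μ) {a b : ℝ}
    (hab : a ≤ b) :
    ∫ v, f v * (if a ≤ v then (1 : ℝ) else 0) ∂μ - ∫ v, f v * (if b ≤ v then (1 : ℝ) else 0) ∂μ
      = ∫ v in Ico a b, f v ∂μ := by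
  rw [integral_mul_ite_le_eq_setIntegral_Ici, integral_mul_ite_le_eq_setIntegral_Ici,
    ← Ico_union_Ici_eq_Ici hab,
    setIntegral_union ((Iio_disjoint_Ici le_rfl).mono_left Ico_subset_Iio_self) measurableSet_Ici hf.integrableOn hf.integrableOn]
  ring

theorem integral_mul_le_integral_mul_ite_le {p : ℝ} {x : ℝ → ℝ} (hf : Integrable f μ)
    (hsign : ∀ᵐ v ∂μ, (v < p → f v ≤ 0) ∧ (p ≤ v → 0 ≤ f v))
    (hx : Measurable x) (hx01 : ∀ v, x v ∈ Icc (0 : ℝ) 1) :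
    ∫ v, f v * x v ∂μ ≤ ∫ v, f v * (if p ≤ v then (1 : ℝ) else 0) ∂μ := by
  refine integral_mono_ae (hf.mul_of_mem_Icc hx.aestronglyMeasurable hx01)
    (hf.mul_of_mem_Icc (measurable_ite_le p).aestronglyMeasurable (ite_le_mem_Icc p)) ?_
  filter_upwards [hsign] with v ⟨hbelow, habove⟩
  obtain ⟨hx0, hx1⟩ := hx01 v
  by_cases h : p ≤ v
  · simpa [h] using mul_le_of_le_one_right (habove h) hx1
  · simpa [h] using mul_nonpos_of_nonpos_of_nonneg (hbelow (not_le.1 h)) hx0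

end Threshold

theorem setIntegral_pos_of_forall_pos {X : Type*} [MeasurableSpace X] {μ : Measure X}
    {f : X → ℝ} {s : Set X}
    (hs : MeasurableSet s) (hμs : 0 < μ s) (hf : IntegrableOn f s μ) (hpos : ∀ v ∈ s, 0 < f v) :
    0 < ∫ v in s, f v ∂μ := by
  rw [setIntegral_pos_iff_support_of_nonneg_ae
    ((ae_restrict_iff' hs).2 (ae_of_all _ fun v hv => (hpos v hv).le)) hf,
    (inter_eq_right (s := Function.support f)).2 fun v hv => (hpos v hv).ne']
  exact hμs

theorem MeasureTheory.Measure.measure_pos_of_isOpen_of_mem_support {X : Type*}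
    [TopologicalSpace X] [MeasurableSpace X] {μ : Measure X} {U : Set X} {v : X}
    (hU : IsOpen U) (hv : v ∈ U) (hvμ : v ∈ μ.support) : 0 < μ U :=
  (Measure.mem_support_iff_forall v).1 hvμ U (hU.mem_nhds hv)

theorem exists_Ico_subset_measure_pos {μ : Measure ℝ} {s : Set ℝ} {p : ℝ} (hs : s ∈ 𝓝 p)
    (hsμ : s ⊆ μ.support) :
    (∃ q < p, Ico q p ⊆ s ∧ 0 < μ (Ico q p)) ∧ (∃ r > p, Ico p r ⊆ s ∧ 0 < μ (Ico p r)) := by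
  obtain ⟨l, u, ⟨hlp, hpu⟩, hlu⟩ := (mem_nhds_iff_exists_Ioo_subset).1 hs
  have hsub : Ico ((l + p) / 2) ((p + u) / 2) ⊆ s := fun v hv =>
    hlu ⟨by linarith [hv.1], by linarith [hv.2]⟩
  have hleft : Ico ((l + p) / 2) p ⊆ s := (Ico_subset_Ico_right (by linarith)).trans hsub
  have hright : Ico p ((p + u) / 2) ⊆ s := (Ico_subset_Ico_left (by linarith)).trans hsub
  have hmid_left : (3 * p + l) / 4 ∈ Ioo ((l + p) / 2) p := ⟨by linarith, by linarith⟩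
  have hmid_right : (3 * p + u) / 4 ∈ Ioo p ((p + u) / 2) := ⟨by linarith, by linarith⟩
  refine ⟨⟨(l + p) / 2, by linarith, hleft, ?_⟩, ⟨(p + u) / 2, by linarith, hright, ?_⟩⟩
  · exact (Measure.measure_pos_of_isOpen_of_mem_support isOpen_Ioo hmid_left
      (hsμ (hleft (Ioo_subset_Ico_self hmid_left)))).trans_le (measure_mono Ioo_subset_Ico_self)
  · exact (Measure.measure_pos_of_isOpen_of_mem_support isOpen_Ioo hmid_right
      (hsμ (hright (Ioo_subset_Ico_self hmid_right)))).trans_le (measure_mono Ioo_subset_Ico_self)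

theorem eq_zero_of_forall_integral_mul_ite_le {μ : Measure ℝ} {f : ℝ → ℝ} {p : ℝ}
    (hf : Integrable f μ) (hfc : ContinuousAt f p) (hp : p ∈ interior μ.support)
    (hopt : ∀ q, ∫ v, f v * (if q ≤ v then (1 : ℝ) else 0) ∂μ
      ≤ ∫ v, f v * (if p ≤ v then (1 : ℝ) else 0) ∂μ) :
    f p = 0 := by
  have hsupp : μ.support ∈ 𝓝 p := mem_interior_iff_mem_nhds.1 hp
  rcases lt_trichotomy (f p) 0 with hneg | hzero | hpos
  · obtain ⟨r, hpr, hsub, hμ⟩ :=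
      (exists_Ico_subset_measure_pos ((hfc.eventually_lt continuousAt_const hneg).and hsupp)
        fun v hv => hv.2).2
    have hgain : 0 < ∫ v in Ico p r, -f v ∂μ :=
      setIntegral_pos_of_forall_pos measurableSet_Ico hμ hf.neg.integrableOn fun v hv =>
        neg_pos.2 (hsub hv).1
    have hdiff := integral_mul_ite_le_sub_integral_mul_ite_le hf hpr.le
    rw [integral_neg] at hgain
    linarith [hopt r]
  · exact hzero
  · obtain ⟨q, hqp, hsub, hμ⟩ :=
      (exists_Ico_subset_measure_pos ((continuousAt_const.eventually_lt hfc hpos).and hsupp)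
        fun v hv => hv.2).1
    have hgain : 0 < ∫ v in Ico q p, f v ∂μ :=
      setIntegral_pos_of_forall_pos measurableSet_Ico hμ hf.integrableOn fun v hv =>
        (hsub hv).1
    have hdiff := integral_mul_ite_le_sub_integral_mul_ite_le hf hqp.le
    linarith [hopt q]

theorem posted_price_offchain_influence_proof_iff_general
    (μ : Measure ℝ) [IsProbabilityMeasure μ]
    (S : Set ℝ)
    (hS_supp : ∀ x : ℝ, x ∈ S ↔ ∀ U ∈ nhds x, 0 < μ U)
    (φ : ℝ → ℝ)
    (hφ_int : Integrable φ μ)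
    (hφ_cont : ContinuousOn φ S)
    (hφ_mono : StrictMonoOn φ S)
    (p : ℝ) (hp : p ∈ interior S)
    (B : ℝ) :
    B = φ p ↔
      ∀ x : ℝ → ℝ, Measurable x → (∀ v, x v ∈ Icc (0:ℝ) 1) →
        ∫ v, (φ v - B) * (if p ≤ v then (1:ℝ) else 0) ∂μ ≥
          ∫ v, (φ v - B) * x v ∂μ := by
  obtain rfl : S = μ.support :=
    Set.ext fun v => (hS_supp v).trans (Measure.mem_support_iff_forall v).symm
  have hpS : p ∈ μ.support := interior_subset hp
  have hfB : Integrable (fun v => φ v - B) μ := hφ_int.sub (integrable_const B)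
  constructor
  · rintro rfl x hx hx01
    refine integral_mul_le_integral_mul_ite_le hfB ?_ hx hx01
    filter_upwards [Measure.support_mem_ae] with v hv
    exact ⟨fun h => sub_nonpos.2 (hφ_mono.monotoneOn hv hpS h.le),
      fun h => sub_nonneg.2 (hφ_mono.monotoneOn hpS hv h)⟩
  · intro hopt
    have hcont : ContinuousAt (fun v => φ v - B) p :=
      (hφ_cont.continuousAt (mem_interior_iff_mem_nhds.1 hp)).sub continuousAt_const
    have := eq_zero_of_forall_integral_mul_ite_le hfB hcont hp fun q =>
      hopt _ (measurable_ite_le q) (ite_le_mem_Icc q)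
    linarith

/-- For a posted-price TFM with price `p` and per-user burn `B`,
the threshold allocation `𝟙[v ≥ p]` maximizes the expected virtual utility
`∫ (φ v − B) · x v dμ` over all measurable allocation rules `x : ℝ → [0,1]`
if and only if `B = φ p`. -/
theorem posted_price_offchain_influence_proof_iff
    (μ : Measure ℝ) [IsProbabilityMeasure μ]
    (S : Set ℝ)
    (hS_supp : ∀ x : ℝ, x ∈ S ↔ ∀ U ∈ nhds x, 0 < μ U)
    (hS_interval : S.OrdConnected)
    (hS_int : (interior S).Nonempty)
    (φ : ℝ → ℝ)
    (hφ_int : Integrable φ μ)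
    (hφ_cont : ContinuousOn φ S)
    (hφ_mono : StrictMonoOn φ S)
    (p : ℝ) (hp : p ∈ interior S)
    (B : ℝ) :
    B = φ p ↔
      ∀ x : ℝ → ℝ, Measurable x → (∀ v, x v ∈ Icc (0:ℝ) 1) →
        ∫ v, (φ v - B) * (if p ≤ v then (1:ℝ) else 0) ∂μ ≥
          ∫ v, (φ v - B) * x v ∂μ :=
  posted_price_offchain_influence_proof_iff_general μ S hS_supp φ hφ_int hφ_cont hφ_mono p hp B
end

section
/- Let μ be a Borel probability measure on ℝ with support S ⊆ [0,∞), let φ : ℝ → ℝ be continuous, and let n ≥ 1. Let X : ℝⁿ → [0,1]ⁿ and B̄ : ℝⁿ → ℝ be functions for which there is a constant c with c ≤ B̄(v) ≤ c + ∑ᵢ vᵢ for all v ∈ Sⁿ. Suppose that for μⁿ-almost every v ∈ Sⁿ, the inequality ∑ᵢ φ(vᵢ)·Xᵢ(v) − B̄(v) ≥ ∑ᵢ φ(vᵢ)·Xᵢ(w) − B̄(w) holds for every w ∈ Sⁿ. Then there exist functions X̃ : Sⁿ → [0,1]ⁿ and B̃ : Sⁿ → ℝ that agree with (X, B̄) outside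 a μⁿ-null subset of Sⁿ and satisfy ∑ᵢ φ(vᵢ)·X̃ᵢ(v) − B̃(v) ≥ ∑ᵢ φ(vᵢ)·X̃ᵢ(w) − B̃(w) for ALL v, w ∈ Sⁿ. -/
/-! The profiles at which `(X, B̄)` maximizes virtual utility form a set `G` whose complement in
`Sⁿ` is null. Replace the menu `{(X w, B̄ w) | w ∈ G}` by its closure `C`; on `C` the burn is
bounded below and allocations lie in `[0,1]ⁿ`, so every virtual-utility functional `p ↦ ∑ᵢ yᵢ p₁ᵢ - p₂` attains its
maximum on `C`. Keeping the original outcome on `G` (which is already maximal on `C` by continuity)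
and choosing a maximizer over `C` elsewhere gives a mechanism that is incentive compatible
everywhere, since every outcome it uses lies in `C`. -/

open MeasureTheory Set Filter Topology

section Menu

variable {ι : Type*}

variable (ι) in
def feasibleOutcomes (c : ℝ) : Set ((ι → ℝ) × ℝ) :=
  univ.pi (fun _ : ι => Icc 0 1) ×ˢ Ici c

theorem isClosed_feasibleOutcomes (c : ℝ) : IsClosed (feasibleOutcomes ι c) :=
  (isClosed_set_pi fun _ _ => isClosed_Icc).prod isClosed_Ici

variable [Fintype ι]

/-- Virtual utility of the value vector `y` for the outcome `p = (allocation, burn)`. -/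
def virtualUtility (y : ι → ℝ) (p : (ι → ℝ) × ℝ) : ℝ :=
  ∑ i, y i * p.1 i - p.2

theorem continuous_virtualUtility (y : ι → ℝ) : Continuous (virtualUtility y) := by
  unfold virtualUtility
  fun_prop

theorem virtualUtility_le_sum_abs_sub (y : ι → ℝ) {p : (ι → ℝ) × ℝ}
    (hp : ∀ i, p.1 i ∈ Icc (0 : ℝ) 1) : virtualUtility y p ≤ ∑ i, |y i| - p.2 := by
  have hsum : ∑ i, y i * p.1 i ≤ ∑ i, |y i| := Finset.sum_le_sum fun i _ =>
    calc y i * p.1 i ≤ |y i| * p.1 i := mul_le_mul_of_nonneg_right (le_abs_self _) (hp i).1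
      _ ≤ |y i| := mul_le_of_le_one_right (abs_nonneg _) (hp i).2
  unfold virtualUtility
  linarith

theorem exists_isMaxOn_virtualUtility {c : ℝ} {C : Set ((ι → ℝ) × ℝ)} (hC : IsClosed C)
    (hCc : C ⊆ feasibleOutcomes ι c) (hne : C.Nonempty) (y : ι → ℝ) :
    ∃ p ∈ C, IsMaxOn (virtualUtility y) C p := by
  obtain ⟨p₀, hp₀⟩ := hne
  refine (continuous_virtualUtility y).continuousOn.exists_isMaxOn' hC hp₀ ?_
  -- Outside a box whose burn coordinate is bounded above, the utility is below that of `p₀`.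
  set K := univ.pi (fun _ : ι => Icc (0 : ℝ) 1) ×ˢ Icc c (∑ i, |y i| - virtualUtility y p₀)
  have hK : IsCompact K := (isCompact_univ_pi fun _ => isCompact_Icc).prod isCompact_Icc
  refine (hasBasis_cocompact.inf_principal C).eventually_iff.2 ⟨K, hK, ?_⟩
  rintro p ⟨hpK, hpC⟩
  obtain ⟨hp₁, hp₂⟩ := hCc hpC
  have hp₁' : ∀ i, p.1 i ∈ Icc (0 : ℝ) 1 := fun i => hp₁ i (mem_univ i)
  have hburn : ∑ i, |y i| - virtualUtility y p₀ < p.2 := by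
    by_contra! h
    exact hpK ⟨hp₁, hp₂, h⟩
  linarith [virtualUtility_le_sum_abs_sub y hp₁']

theorem exists_incentiveCompatible_extension {Θ : Type*} (G : Set Θ) (y : Θ → ι → ℝ)
    (o : Θ → (ι → ℝ) × ℝ) {c : ℝ} (ho : ∀ w ∈ G, o w ∈ feasibleOutcomes ι c)
    (hIC : ∀ v ∈ G, ∀ w ∈ G, virtualUtility (y v) (o w) ≤ virtualUtility (y v) (o v)) :
    ∃ F : Θ → (ι → ℝ) × ℝ, (∀ v i, (F v).1 i ∈ Icc (0 : ℝ) 1) ∧ (∀ v ∈ G, F v = o v) ∧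
      ∀ v w, virtualUtility (y v) (F w) ≤ virtualUtility (y v) (F v) := by
  classical
  rcases G.eq_empty_or_nonempty with rfl | hG
  · exact ⟨0, by simp, by simp, fun _ _ => le_rfl⟩
  set C := closure (o '' G)
  have hCc : C ⊆ feasibleOutcomes ι c :=
    closure_minimal (image_subset_iff.2 ho) (isClosed_feasibleOutcomes c)
  have hmax_good : ∀ v ∈ G, IsMaxOn (virtualUtility (y v)) C (o v) := fun v hv =>
    IsMaxOn.closure (forall_mem_image.2 fun w hw => hIC v hv w hw)
      (continuous_virtualUtility _).continuousOn
  choose p hpC hpmax using fun v =>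
    exists_isMaxOn_virtualUtility isClosed_closure hCc (hG.image o).closure (y v)
  set F : Θ → (ι → ℝ) × ℝ := fun v => if v ∈ G then o v else p v
  have hF : ∀ v, F v ∈ C ∧ IsMaxOn (virtualUtility (y v)) C (F v) := by
    intro v
    by_cases hv : v ∈ G
    · simpa only [F, if_pos hv] using ⟨subset_closure (mem_image_of_mem o hv), hmax_good v hv⟩
    · simpa only [F, if_neg hv] using ⟨hpC v, hpmax v⟩
  exact ⟨F, fun v i => (hCc (hF v).1).1 i (mem_univ i), fun v hv => if_pos hv,
    fun v w => (hF v).2 (hF w).1⟩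

end Menu

theorem monopsonist_smoothening_general
    (μ : Measure ℝ)
    (S : Set ℝ)
    (φ : ℝ → ℝ)
    (n : ℕ)
    (X : (Fin n → ℝ) → (Fin n → ℝ))
    (Bbar : (Fin n → ℝ) → ℝ)
    (hX_mem : ∀ v i, X v i ∈ Icc (0:ℝ) 1)
    (c : ℝ)
    (hB_bdd : ∀ v : Fin n → ℝ, (∀ i, v i ∈ S) →
      c ≤ Bbar v ∧ Bbar v ≤ c + ∑ i, v i)
    (hIC : ∀ᵐ v ∂(Measure.pi fun _ : Fin n => μ),
      (∀ i, v i ∈ S) →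
      ∀ w : Fin n → ℝ, (∀ i, w i ∈ S) →
        ∑ i, φ (v i) * X w i - Bbar w ≤ ∑ i, φ (v i) * X v i - Bbar v) :
    ∃ (Xt : (Fin n → ℝ) → (Fin n → ℝ)) (Bt : (Fin n → ℝ) → ℝ),
      (∀ v : Fin n → ℝ, (∀ i, v i ∈ S) → ∀ i, Xt v i ∈ Icc (0:ℝ) 1) ∧
      (Measure.pi fun _ : Fin n => μ)
        {v | (∀ i, v i ∈ S) ∧ ¬(Xt v = X v ∧ Bt v = Bbar v)} = 0 ∧
      (∀ v w : Fin n → ℝ, (∀ i, v i ∈ S) → (∀ i, w i ∈ S) →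
        ∑ i, φ (v i) * Xt w i - Bt w ≤ ∑ i, φ (v i) * Xt v i - Bt v) := by
  set G := {v : Fin n → ℝ | (∀ i, v i ∈ S) ∧ ∀ w : Fin n → ℝ, (∀ i, w i ∈ S) →
    ∑ i, φ (v i) * X w i - Bbar w ≤ ∑ i, φ (v i) * X v i - Bbar v}
  have hG_ae : (Measure.pi fun _ : Fin n => μ) {v | (∀ i, v i ∈ S) ∧ v ∉ G} = 0 := by
    refine measure_mono_null ?_ (ae_iff.1 hIC)
    rintro v ⟨hv, hvG⟩ hIC_v
    exact hvG ⟨hv, hIC_v hv⟩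
  obtain ⟨F, hF_mem, hF_eq, hF_IC⟩ := exists_incentiveCompatible_extension G
    (fun v i => φ (v i)) (fun v => (X v, Bbar v)) (c := c)
    (fun w hw => ⟨fun i _ => hX_mem w i, (hB_bdd w hw.1).1⟩) (fun v hv w hw => hv.2 w hw.1)
  refine ⟨fun v => (F v).1, fun v => (F v).2, fun v _ => hF_mem v,
    measure_mono_null ?_ hG_ae, fun v w _ _ => hF_IC v w⟩
  rintro v ⟨hv, hne⟩
  exact ⟨hv, fun hvG => hne (Prod.ext_iff.1 (hF_eq v hvG))⟩

/-- Theorem 4.6, monopsonist smoothening. If a mechanism `(X, B̄)`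
pointwise maximizes the miner's virtual utility for `μⁿ`-almost-every value profile in
`Sⁿ`, and the burn is bounded as `c ≤ B̄(v) ≤ c + ∑ᵢ vᵢ` on `Sⁿ`, then `(X, B̄)` can be
modified on a `μⁿ`-null subset of `Sⁿ` so that the inequality holds for ALL profiles
`v, w ∈ Sⁿ`. -/
theorem monopsonist_smoothening
    (μ : Measure ℝ) [IsProbabilityMeasure μ]
    (S : Set ℝ)
    (hS_supp : ∀ x : ℝ, x ∈ S ↔ ∀ U ∈ nhds x, 0 < μ U)
    (hS_nonneg : S ⊆ Ici (0:ℝ))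
    (φ : ℝ → ℝ) (hφ_cont : Continuous φ)
    (n : ℕ) (hn : 1 ≤ n)
    (X : (Fin n → ℝ) → (Fin n → ℝ))
    (Bbar : (Fin n → ℝ) → ℝ)
    (hX_mem : ∀ v i, X v i ∈ Icc (0:ℝ) 1)
    (c : ℝ)
    (hB_bdd : ∀ v : Fin n → ℝ, (∀ i, v i ∈ S) →
      c ≤ Bbar v ∧ Bbar v ≤ c + ∑ i, v i)
    (hIC : ∀ᵐ v ∂(Measure.pi fun _ : Fin n => μ),
      (∀ i, v i ∈ S) →
      ∀ w : Fin n → ℝ, (∀ i, w i ∈ S) →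
        ∑ i, φ (v i) * X w i - Bbar w ≤ ∑ i, φ (v i) * X v i - Bbar v) :
    ∃ (Xt : (Fin n → ℝ) → (Fin n → ℝ)) (Bt : (Fin n → ℝ) → ℝ),
      (∀ v : Fin n → ℝ, (∀ i, v i ∈ S) → ∀ i, Xt v i ∈ Icc (0:ℝ) 1) ∧
      (Measure.pi fun _ : Fin n => μ)
        {v | (∀ i, v i ∈ S) ∧ ¬(Xt v = X v ∧ Bt v = Bbar v)} = 0 ∧
      (∀ v w : Fin n → ℝ, (∀ i, v i ∈ S) → (∀ i, w i ∈ S) →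
        ∑ i, φ (v i) * Xt w i - Bt w ≤ ∑ i, φ (v i) * Xt v i - Bt v) :=
  monopsonist_smoothening_general μ S φ n X Bbar hX_mem c hB_bdd hIC
end

section
/- Let U : ℝⁿ → ℝ be convex and non-decreasing with respect to the coordinatewise order. Then there exists a map X : ℝⁿ → ℝⁿ with X(v) ≥ 0 componentwise for every v such that, setting P(v) := ⟨v, X(v)⟩ − U(v), the mechanism (X, P) is incentive compatible: for all v, w ∈ ℝⁿ, ⟨v, X(v)⟩ − P(v) ≥ ⟨v, X(w)⟩ − P(w); moreover the buyer's utility ⟨v, X(v)⟩ − P(v) equals U(v) for every v. -/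
/-!
Choose for every `w` a subgradient `X w` of `U` at `w`, which exists since a convex function
on `ℝⁿ` is continuous and its epigraph has a supporting hyperplane at `(w, U w)`. With
`P w = ⟨w, X w⟩ - U w`, the utility of reporting `w` at true value `v` is
`U w + ⟨X w, v - w⟩`, so incentive compatibility is exactly the subgradient inequality, and
monotonicity of `U` makes every subgradient nonnegative.
-/

open Set

section Subgradient

variable {E : Type*} [TopologicalSpace E] [AddCommGroup E] [Module ℝ E]

def IsSubgradientAt (f : E → ℝ) (g : StrongDual ℝ E) (x : E) : Prop :=
  ∀ y, f x + g (y - x) ≤ f y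

theorem Monotone.isSubgradientAt_nonneg [PartialOrder E] [IsOrderedAddMonoid E] {f : E → ℝ}
    (hf : Monotone f) {g : StrongDual ℝ E} {x : E} (hg : IsSubgradientAt f g x) {z : E}
    (hz : 0 ≤ z) : 0 ≤ g z := by
  have := hg (x - z)
  rw [sub_sub_cancel_left, map_neg] at this
  linarith [hf (sub_le_self x hz)]

variable [IsTopologicalAddGroup E] [ContinuousSMul ℝ E]

/-- Separate `(x, f x)` from the open convex strict epigraph of `f` by a functional `φ` on
`E × ℝ`; then `φ (0, 1) < 0`, and rescaling `φ` on `E × {0}` gives the subgradient. -/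
theorem ConvexOn.exists_isSubgradientAt {f : E → ℝ} (hconv : ConvexOn ℝ univ f)
    (hcont : Continuous f) (x : E) : ∃ g : StrongDual ℝ E, IsSubgradientAt f g x := by
  let S : Set (E × ℝ) := {p | p.1 ∈ univ ∧ f p.1 < p.2}
  have hS_open : IsOpen S := by
    simpa [S] using isOpen_lt (hcont.comp continuous_fst) continuous_snd
  obtain ⟨φ, hφ⟩ := geometric_hahn_banach_open_point hconv.convex_strict_epigraph hS_open
    (x := (x, f x)) (by simp)
  have hφ_apply (y : E) (t : ℝ) : φ (y, t) = φ (y, 0) + t * φ (0, 1) := by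
    rw [← smul_eq_mul, ← map_smul, ← map_add, Prod.smul_mk, smul_zero, smul_eq_mul, mul_one,
      Prod.mk_add_mk, add_zero, zero_add]
  have hc : φ (0, 1) < 0 := by
    have := hφ (x, f x + 1) (by simp)
    rw [hφ_apply, hφ_apply x (f x)] at this
    linarith
  refine ⟨(-(φ (0, 1))⁻¹) • φ.comp (ContinuousLinearMap.inl ℝ E ℝ), fun y => ?_⟩
  have hsep (t : ℝ) (ht : f y < t) : f x - φ (y - x, 0) / φ (0, 1) < t := by
    have := hφ (y, t) (by simp [ht])
    rw [hφ_apply, hφ_apply x (f x)] at this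
    have hsub : φ (y - x, 0) = φ (y, 0) - φ (x, 0) := by
      rw [← map_sub, Prod.mk_sub_mk, sub_zero]
    rw [sub_lt_comm, hsub, lt_div_iff_of_neg hc]
    linarith
  simpa [div_eq_inv_mul, sub_eq_add_neg] using le_of_forall_gt hsep

end Subgradient

theorem sum_mul_map_single {ι R F : Type*} [Fintype ι] [DecidableEq ι] [CommSemiring R]
    [FunLike F (ι → R) R] [LinearMapClass F R (ι → R) R] (f : F) (v : ι → R) :
    ∑ i, v i * f (Pi.single i 1) = f v := by
  conv_rhs => rw [← Finset.univ_sum_single v]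
  rw [map_sum]
  refine Finset.sum_congr rfl fun i _ => ?_
  rw [← smul_eq_mul, ← map_smul, ← Pi.single_smul, smul_eq_mul, mul_one]

/-- existence direction of Rochet's characterization, Theorem 4.7.
Every convex, coordinatewise non-decreasing `U : ℝⁿ → ℝ` is the utility function of
some DSIC mechanism for a single additive buyer: there is an allocation rule `X ≥ 0`
with payment `P(v) = ⟨v, X(v)⟩ − U(v)` such that `(X, P)` is incentive compatible and
the buyer's utility equals `U` everywhere. -/
theorem rochet_existence
    (n : ℕ) (U : (Fin n → ℝ) → ℝ)
    (hU_convex : ConvexOn ℝ Set.univ U) (hU_mono : Monotone U) :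
    ∃ (X : (Fin n → ℝ) → (Fin n → ℝ)) (P : (Fin n → ℝ) → ℝ),
      (∀ v i, 0 ≤ X v i) ∧
      (∀ v, P v = ∑ i, v i * X v i - U v) ∧
      (∀ v w : Fin n → ℝ,
        ∑ i, v i * X w i - P w ≤ ∑ i, v i * X v i - P v) ∧
      (∀ v, ∑ i, v i * X v i - P v = U v) := by
  choose g hg using hU_convex.exists_isSubgradientAt hU_convex.locallyLipschitz.continuous
  refine ⟨fun w i => g w (Pi.single i 1), fun v => ∑ i, v i * g v (Pi.single i 1) - U v,
    fun w i => hU_mono.isSubgradientAt_nonneg (hg w) (Pi.single_nonneg.2 zero_le_one),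
    fun v => rfl, fun v w => ?_, fun v => by ring⟩
  have hIC := hg w v
  simp only [sum_mul_map_single, map_sub] at hIC ⊢
  linarith
end

section
/- Let j ≤ t ≤ n be positive integers, let 0 ≤ v_{n+1} ≤ v_n ≤ ⋯ ≤ v_j be reals, let w ∈ [v_{t+1}, v_t], and let x_j, …, x_{n+1} be reals. Define A : ℝ → ℝ by A(z) = 0 on [0, v_{n+1}) and A(z) = x_i on [v_{i+1}, v_i) for j ≤ i ≤ n; define A' : ℝ → ℝ by A'(z) = 0 on [0, v_{n+1}), A'(z) = x_{i+1} on [v_{i+1}, v_i) for t+1 ≤ i ≤ n, A'(z) = x_{t+1} on [v_{t+1}, w), A'(z) = x_t on [w, v_t), and A'(z) = x_i on [v_{i+1}, v_i) for j ≤ i ≤ t−1. Then ∫₀^{v_j} A(z) dz − ∫₀^{v_j} A'(z) dz = (w − v_{t+1})·(x_t − x_{t+1}) + ∑_{i=t+1}^{n} (v_i − v_{i+1})·(x_i − x_{i+1}); equivalently, the Myerson payment at v_j increases by exactly this amount when A is replaced by A'. -/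
/-!
Both allocation rules are step functions, so each integral is a sum of step widths times step
heights. Below `v (n+1)` both rules vanish and above `v t` they coincide. On `[v (t+1), v t)` the
fabricated bid `w` splits the step `x t` of `A` into `x (t+1)` on `[v (t+1), w)` and `x t` on
`[w, v t)`, and below `v (t+1)` every step of `A'` sits one rank lower than that of `A`.
-/

open MeasureTheory Set

section StepFunction

variable {E : Type*} [NormedAddCommGroup E] {f : ℝ → E}

theorem intervalIntegrable_of_eqOn_Ico {a b : ℝ} {c : E} (hab : a ≤ b)
    (hf : EqOn f (fun _ => c) (Ico a b)) : IntervalIntegrable f volume a b :=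
  intervalIntegrable_const.congr_uIoo <| by
    rw [uIoo_of_le hab]
    exact (hf.mono Ioo_subset_Ico_self).symm

theorem integral_eq_of_eqOn_Ico [NormedSpace ℝ E] [CompleteSpace E] {a b : ℝ} {c : E}
    (hab : a ≤ b) (hf : EqOn f (fun _ => c) (Ico a b)) : ∫ z in a..b, f z = (b - a) • c := by
  rw [← intervalIntegral.integral_const c]
  refine intervalIntegral.integral_congr_uIoo ?_
  rw [uIoo_of_le hab]
  exact hf.mono Ioo_subset_Ico_self

variable {v : ℕ → ℝ} {c : ℕ → E} {k m : ℕ}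

theorem intervalIntegrable_of_eqOn_Ico_steps (hkm : k ≤ m)
    (hv : ∀ i, k ≤ i → i < m → v (i + 1) ≤ v i)
    (hf : ∀ i, k ≤ i → i < m → EqOn f (fun _ => c i) (Ico (v (i + 1)) (v i))) :
    IntervalIntegrable f volume (v m) (v k) := by
  induction m, hkm using Nat.le_induction with
  | base => exact .refl
  | succ m hkm ih =>
    exact (intervalIntegrable_of_eqOn_Ico (hv m hkm m.lt_succ_self) (hf m hkm m.lt_succ_self)).trans
      (ih (fun i hi him => hv i hi (by omega)) (fun i hi him => hf i hi (by omega)))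

theorem integral_eq_sum_of_eqOn_Ico_steps [NormedSpace ℝ E] [CompleteSpace E] (hkm : k ≤ m)
    (hv : ∀ i, k ≤ i → i < m → v (i + 1) ≤ v i)
    (hf : ∀ i, k ≤ i → i < m → EqOn f (fun _ => c i) (Ico (v (i + 1)) (v i))) :
    ∫ z in v m..v k, f z = ∑ i ∈ Finset.Ico k m, (v i - v (i + 1)) • c i := by
  induction m, hkm using Nat.le_induction with
  | base => simp
  | succ m hkm ih =>
    have hv' : ∀ i, k ≤ i → i < m → v (i + 1) ≤ v i := fun i hi him => hv i hi (by omega)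
    have hf' : ∀ i, k ≤ i → i < m → EqOn f (fun _ => c i) (Ico (v (i + 1)) (v i)) :=
      fun i hi him => hf i hi (by omega)
    have hle := hv m hkm m.lt_succ_self
    rw [← intervalIntegral.integral_add_adjacent_intervals
        (intervalIntegrable_of_eqOn_Ico hle (hf m hkm m.lt_succ_self))
        (intervalIntegrable_of_eqOn_Ico_steps hkm hv' hf'),
      integral_eq_of_eqOn_Ico hle (hf m hkm m.lt_succ_self), ih hv' hf',
      Finset.sum_Ico_succ_top hkm, add_comm]

theorem integral_zero_eq_sum_of_eqOn_Ico_steps [NormedSpace ℝ E] [CompleteSpace E]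
    (hkm : k ≤ m) (hm : 0 ≤ v m) (h0 : EqOn f (fun _ => 0) (Ico 0 (v m)))
    (hv : ∀ i, k ≤ i → i < m → v (i + 1) ≤ v i)
    (hf : ∀ i, k ≤ i → i < m → EqOn f (fun _ => c i) (Ico (v (i + 1)) (v i))) :
    ∫ z in 0..v k, f z = ∑ i ∈ Finset.Ico k m, (v i - v (i + 1)) • c i := by
  rw [← intervalIntegral.integral_add_adjacent_intervals (intervalIntegrable_of_eqOn_Ico hm h0)
      (intervalIntegrable_of_eqOn_Ico_steps hkm hv hf),
    integral_eq_of_eqOn_Ico hm h0, integral_eq_sum_of_eqOn_Ico_steps hkm hv hf, smul_zero,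
    zero_add]

end StepFunction

theorem position_auction_payment_increase_general
    (j t n : ℕ) (hjt : j ≤ t) (htn : t ≤ n)
    (v x : ℕ → ℝ) (w : ℝ)
    (hv0 : 0 ≤ v (n+1))
    (hv_mono : ∀ i, j ≤ i → i ≤ n → v (i+1) ≤ v i)
    (hw : w ∈ Set.Icc (v (t+1)) (v t))
    (A A' : ℝ → ℝ)
    (hA0 : ∀ z ∈ Set.Ico (0:ℝ) (v (n+1)), A z = 0)
    (hAi : ∀ i, j ≤ i → i ≤ n → ∀ z ∈ Set.Ico (v (i+1)) (v i), A z = x i)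
    (hA'0 : ∀ z ∈ Set.Ico (0:ℝ) (v (n+1)), A' z = 0)
    (hA'low : ∀ i, t+1 ≤ i → i ≤ n → ∀ z ∈ Set.Ico (v (i+1)) (v i), A' z = x (i+1))
    (hA'w1 : ∀ z ∈ Set.Ico (v (t+1)) w, A' z = x (t+1))
    (hA'w2 : ∀ z ∈ Set.Ico w (v t), A' z = x t)
    (hA'high : ∀ i, j ≤ i → i ≤ t-1 → ∀ z ∈ Set.Ico (v (i+1)) (v i), A' z = x i) :
    (∫ z in (0:ℝ)..(v j), A z) - (∫ z in (0:ℝ)..(v j), A' z)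
      = (w - v (t+1)) * (x t - x (t+1))
        + ∑ i ∈ Finset.Icc (t+1) n, (v i - v (i+1)) * (x i - x (i+1)) := by
  have hvA : ∀ i, j ≤ i → i < n + 1 → v (i + 1) ≤ v i :=
    fun i hi hin => hv_mono i hi (by omega)
  have hvlow : ∀ i, t + 1 ≤ i → i < n + 1 → v (i + 1) ≤ v i :=
    fun i hi hin => hv_mono i (by omega) (by omega)
  have hvhigh : ∀ i, j ≤ i → i < t → v (i + 1) ≤ v i :=
    fun i hi hit => hv_mono i hi (by omega)
  have hA'low' :
      ∀ i, t + 1 ≤ i → i < n + 1 → EqOn A' (fun _ => x (i + 1)) (Ico (v (i + 1)) (v i)) :=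
    fun i hi hin => hA'low i hi (by omega)
  have hA'high' : ∀ i, j ≤ i → i < t → EqOn A' (fun _ => x i) (Ico (v (i + 1)) (v i)) :=
    fun i hi hit => hA'high i hi (by omega)
  have hlow := (intervalIntegrable_of_eqOn_Ico hv0 hA'0).trans
    (intervalIntegrable_of_eqOn_Ico_steps (by omega) hvlow hA'low')
  have hmid₁ := intervalIntegrable_of_eqOn_Ico hw.1 hA'w1
  have hmid₂ := intervalIntegrable_of_eqOn_Ico hw.2 hA'w2
  have hhigh := intervalIntegrable_of_eqOn_Ico_steps hjt hvhigh hA'high'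
  rw [← intervalIntegral.integral_add_adjacent_intervals ((hlow.trans hmid₁).trans hmid₂)
      hhigh,
    ← intervalIntegral.integral_add_adjacent_intervals (hlow.trans hmid₁) hmid₂,
    ← intervalIntegral.integral_add_adjacent_intervals hlow hmid₁,
    integral_zero_eq_sum_of_eqOn_Ico_steps (by omega) hv0 hA0 hvA
      fun i hi hin => hAi i hi (by omega),
    integral_zero_eq_sum_of_eqOn_Ico_steps (by omega) hv0 hA'0 hvlow hA'low',
    integral_eq_of_eqOn_Ico hw.1 hA'w1, integral_eq_of_eqOn_Ico hw.2 hA'w2,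
    integral_eq_sum_of_eqOn_Ico_steps hjt hvhigh hA'high',
    ← Finset.sum_Ico_consecutive _ hjt (by omega : t ≤ n + 1),
    Finset.sum_eq_sum_Ico_succ_bot (by omega : t < n + 1), Finset.Ico_add_one_right_eq_Icc]
  simp only [smul_eq_mul, mul_sub, Finset.sum_sub_distrib]
  ring

/-- Claim E.4: payment increase from one fabricated bid.
`A` is the step allocation rule before the miner fabricates the bid `w`
(`A = xᵢ` on `[v_{i+1}, vᵢ)` for `j ≤ i ≤ n`, `0` on `[0, v_{n+1})`), and `A'` is the
rule after fabricating `w ∈ [v_{t+1}, v_t]` (ranks below `t` shift down by one).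
Then `∫₀^{v_j} A − ∫₀^{v_j} A' = (w − v_{t+1})(x_t − x_{t+1})
  + ∑_{i=t+1}^{n} (vᵢ − v_{i+1})(xᵢ − x_{i+1})`,
which is exactly the increase in the Myerson payment of the `j`-th ranked user. -/
theorem position_auction_payment_increase
    (j t n : ℕ) (hj : 1 ≤ j) (hjt : j ≤ t) (htn : t ≤ n)
    (v x : ℕ → ℝ) (w : ℝ)
    (hv0 : 0 ≤ v (n+1))
    (hv_mono : ∀ i, j ≤ i → i ≤ n → v (i+1) ≤ v i)
    (hw : w ∈ Set.Icc (v (t+1)) (v t))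
    (A A' : ℝ → ℝ)
    (hA0 : ∀ z ∈ Set.Ico (0:ℝ) (v (n+1)), A z = 0)
    (hAi : ∀ i, j ≤ i → i ≤ n → ∀ z ∈ Set.Ico (v (i+1)) (v i), A z = x i)
    (hA'0 : ∀ z ∈ Set.Ico (0:ℝ) (v (n+1)), A' z = 0)
    (hA'low : ∀ i, t+1 ≤ i → i ≤ n → ∀ z ∈ Set.Ico (v (i+1)) (v i), A' z = x (i+1))
    (hA'w1 : ∀ z ∈ Set.Ico (v (t+1)) w, A' z = x (t+1))
    (hA'w2 : ∀ z ∈ Set.Ico w (v t), A' z = x t)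
    (hA'high : ∀ i, j ≤ i → i ≤ t-1 → ∀ z ∈ Set.Ico (v (i+1)) (v i), A' z = x i) :
    (∫ z in (0:ℝ)..(v j), A z) - (∫ z in (0:ℝ)..(v j), A' z)
      = (w - v (t+1)) * (x t - x (t+1))
        + ∑ i ∈ Finset.Icc (t+1) n, (v i - v (i+1)) * (x i - x (i+1)) :=
  position_auction_payment_increase_general j t n hjt htn v x w hv0 hv_mono hw A A' hA0 hAi hA'0
    hA'low hA'w1 hA'w2 hA'high
end

section
/- Let t ≤ n be positive integers, let β ≥ 0 and r ≥ β be reals, let w ≥ v_{t+1} ≥ v_{t+2} ≥ ⋯ ≥ v_{n+1} = r be reals, and let x_t ≥ x_{t+1} ≥ ⋯ ≥ x_{n+1} ≥ 0 be reals. Then t·(w − v_{t+1})·(x_t − x_{t+1}) + ∑_{i=t+1}^{n} (i−1)·(v_i − v_{i+1})·(x_i − x_{i+1}) − ∑_{i=t+1}^{n} v_{i+1}·(x_i − x_{i+1}) − β·x_{n+1} ≤ max_{t ≤ t̂ ≤ n} [ t̂·(w − r)·(x_{t̂} − x_{t̂+1}) − β·x_{t̂+1} ]. -/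
/-!
Let `M = i (x_i - x_{i+1})` be the largest such product over `t ≤ i ≤ n`, attained at `m`.
The front term is at most `(w - v_{t+1}) M` and the `i`-th summand of the first sum at most
`(v_i - v_{i+1}) M`; these telescope to `(w - r) M = m (w - r) (x_m - x_{m+1})`. Every bid
`v_{i+1}` is at least `r ≥ β`, so the payments cover the burn `β (x_{t+1} - x_{n+1})`, and the
last two terms are at most `-β x_{t+1} ≤ -β x_{m+1}`. So the left side is bounded by the
`m`-th term of the maximum.
-/

open Finset

theorem Finset.sum_Icc_sub_succ {M : Type*} [AddCommGroup M] (f : ℕ → M) {a b : ℕ}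
    (hab : a ≤ b + 1) : ∑ i ∈ Icc a b, (f i - f (i + 1)) = f a - f (b + 1) := by
  rw [← Ico_add_one_right_eq_Icc, ← neg_sub, ← sum_Ico_sub f hab, ← sum_neg_distrib]
  simp only [neg_sub]

theorem antitoneOn_Icc_of_succ_le {α : Type*} [Preorder α] {f : ℕ → α} {a b : ℕ}
    (hf : ∀ i, a ≤ i → i ≤ b → f (i + 1) ≤ f i) : AntitoneOn f (Set.Icc a (b + 1)) :=
  antitoneOn_of_add_one_le Set.ordConnected_Icc fun i _ hi hi1 => hf i hi.1 (by grind)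

section WeightedTelescope

variable {f g : ℕ → ℝ} {a b : ℕ} {c : ℝ}

theorem sum_sub_succ_mul_le (hab : a ≤ b + 1) (hf : AntitoneOn f (Set.Icc a (b + 1)))
    (hg : ∀ i ∈ Icc a b, g i ≤ c) :
    ∑ i ∈ Icc a b, (f i - f (i + 1)) * g i ≤ (f a - f (b + 1)) * c := by
  rw [← sum_Icc_sub_succ f hab, sum_mul]
  refine sum_le_sum fun i hi => mul_le_mul_of_nonneg_left (hg i hi) (sub_nonneg.mpr ?_)
  obtain ⟨hai, hib⟩ := mem_Icc.mp hi
  exact hf ⟨hai, by omega⟩ ⟨by omega, by omega⟩ (Nat.le_succ i)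

theorem le_sum_sub_succ_mul (hab : a ≤ b + 1) (hf : AntitoneOn f (Set.Icc a (b + 1)))
    (hg : ∀ i ∈ Icc a b, c ≤ g i) :
    (f a - f (b + 1)) * c ≤ ∑ i ∈ Icc a b, (f i - f (i + 1)) * g i := by
  have := sum_sub_succ_mul_le (g := -g) (c := -c) hab hf fun i hi => neg_le_neg (hg i hi)
  simpa only [Pi.neg_apply, mul_neg, sum_neg_distrib, neg_le_neg_iff] using this

theorem sum_pred_mul_sub_succ_mul_sub_succ_le {x : ℕ → ℝ} (hab : a ≤ b + 1)
    (hf : AntitoneOn f (Set.Icc a (b + 1))) (hx : ∀ i ∈ Icc a b, x (i + 1) ≤ x i)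
    (hc : ∀ i ∈ Icc a b, (i : ℝ) * (x i - x (i + 1)) ≤ c) :
    ∑ i ∈ Icc a b, ((i : ℝ) - 1) * (f i - f (i + 1)) * (x i - x (i + 1))
      ≤ (f a - f (b + 1)) * c := by
  refine le_of_eq_of_le (sum_congr rfl fun i _ => by ring)
    (sum_sub_succ_mul_le (g := fun i => ((i : ℝ) - 1) * (x i - x (i + 1))) hab hf fun i hi => ?_)
  linarith [hc i hi, hx i hi]

end WeightedTelescope

theorem fabricating_single_lowest_bid_dominates_general
    (t n : ℕ) (htn : t ≤ n)
    (β r w : ℝ) (hβ : 0 ≤ β) (hrβ : β ≤ r)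
    (v x : ℕ → ℝ)
    (hw : v (t+1) ≤ w)
    (hv_mono : ∀ i, t+1 ≤ i → i ≤ n → v (i+1) ≤ v i)
    (hvr : v (n+1) = r)
    (hx_mono : ∀ i, t ≤ i → i ≤ n → x (i+1) ≤ x i) :
    (t:ℝ) * (w - v (t+1)) * (x t - x (t+1))
      + ∑ i ∈ Finset.Icc (t+1) n, ((i:ℝ) - 1) * (v i - v (i+1)) * (x i - x (i+1))
      - ∑ i ∈ Finset.Icc (t+1) n, v (i+1) * (x i - x (i+1))
      - β * x (n+1)
    ≤ (Finset.Icc t n).sup' (Finset.nonempty_Icc.mpr htn)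
        (fun i => (i:ℝ) * (w - r) * (x i - x (i+1)) - β * x (i+1)) := by
  have hv := antitoneOn_Icc_of_succ_le hv_mono
  have hx := antitoneOn_Icc_of_succ_le hx_mono
  obtain ⟨m, hm, hmax⟩ := exists_max_image (Icc t n) (fun i => (i : ℝ) * (x i - x (i + 1)))
    (nonempty_Icc.mpr htn)
  set M := (m : ℝ) * (x m - x (m + 1))
  have hfront : (t : ℝ) * (w - v (t + 1)) * (x t - x (t + 1)) ≤ (w - v (t + 1)) * M := by
    rw [mul_comm _ (w - _), mul_assoc]
    exact mul_le_mul_of_nonneg_left (hmax t (left_mem_Icc.mpr htn)) (sub_nonneg.mpr hw)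
  have hrevenue := sum_pred_mul_sub_succ_mul_sub_succ_le (by omega) hv
    (fun i hi => hx_mono i (by grind) (mem_Icc.mp hi).2)
    (fun i hi => hmax i (mem_Icc.mpr ⟨by grind, (mem_Icc.mp hi).2⟩))
  have hpayment : β * (x (t + 1) - x (n + 1))
      ≤ ∑ i ∈ Icc (t + 1) n, v (i + 1) * (x i - x (i + 1)) := by
    rw [mul_comm]
    refine le_of_le_of_eq (le_sum_sub_succ_mul (by omega)
      (hx.mono (Set.Icc_subset_Icc_left (by omega))) fun i hi => ?_)
      (sum_congr rfl fun i _ => mul_comm _ _)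
    obtain ⟨hti, hin⟩ := mem_Icc.mp hi
    exact hrβ.trans (hvr ▸ hv ⟨by omega, by omega⟩ ⟨by omega, le_rfl⟩ (by omega))
  have hburn : β * x (m + 1) ≤ β * x (t + 1) := by
    obtain ⟨htm, hmn⟩ := mem_Icc.mp hm
    exact mul_le_mul_of_nonneg_left
      (hx ⟨by omega, by omega⟩ ⟨by omega, by omega⟩ (by omega)) hβ
  rw [hvr] at hrevenue
  refine le_sup'_of_le _ hm ?_
  linarith

/-- key inequality of Lemma E.3, `thm:PositionFakeBids`.
The miner's net revenue change from fabricating a single bid `w` facing lower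
bids `v_{t+1} ≥ ⋯ ≥ v_{n+1} = r` (with reserve `r ≥ β ≥ 0` and rank allocations
`x_t ≥ ⋯ ≥ x_{n+1} ≥ 0`) is at most the best revenue change from fabricating `w`
below `t̂` bids that all exceed `w`, over `t ≤ t̂ ≤ n`. -/
theorem fabricating_single_lowest_bid_dominates
    (t n : ℕ) (ht : 1 ≤ t) (htn : t ≤ n)
    (β r w : ℝ) (hβ : 0 ≤ β) (hrβ : β ≤ r)
    (v x : ℕ → ℝ)
    (hw : v (t+1) ≤ w)
    (hv_mono : ∀ i, t+1 ≤ i → i ≤ n → v (i+1) ≤ v i)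
    (hvr : v (n+1) = r)
    (hx_mono : ∀ i, t ≤ i → i ≤ n → x (i+1) ≤ x i)
    (hx_nonneg : 0 ≤ x (n+1)) :
    (t:ℝ) * (w - v (t+1)) * (x t - x (t+1))
      + ∑ i ∈ Finset.Icc (t+1) n, ((i:ℝ) - 1) * (v i - v (i+1)) * (x i - x (i+1))
      - ∑ i ∈ Finset.Icc (t+1) n, v (i+1) * (x i - x (i+1))
      - β * x (n+1)
    ≤ (Finset.Icc t n).sup' (Finset.nonempty_Icc.mpr htn)
        (fun i => (i:ℝ) * (w - r) * (x i - x (i+1)) - β * x (i+1)) :=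
  fabricating_single_lowest_bid_dominates_general t n htn β r w hβ hrβ v x hw hv_mono hvr hx_mono
end

section
/- Let n ≥ 1, let x_1, …, x_n : [0,∞) → [0,1] be measurable functions satisfying x_1(z) ≥ x_2(z) ≥ ⋯ ≥ x_n(z) for every z ≥ 0, and let v_1 ≥ v_2 ≥ ⋯ ≥ v_n ≥ v_{n+1} = 0 be reals. Then ∑_{i=1}^{n} i·∫_{v_{i+1}}^{v_i} x_i(z) dz ≤ ∑_{i=1}^{n} ∫₀^{v_i} x_i(z) dz. -/
/-!
Cut each `[0, vᵢ]` at the breakpoints `v_{i+1} ≥ ⋯ ≥ v_{n+1} = 0`, so that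
`∫₀^{vᵢ} xᵢ = ∑_{j ≥ i} ∫_{v_{j+1}}^{v_j} xᵢ`. Exchanging the two sums, the piece
`[v_{j+1}, v_j]` receives the `j` integrands `x₁, …, x_j`, each of which dominates `x_j`;
so it contributes at least `j · ∫_{v_{j+1}}^{v_j} x_j`.
-/

open Finset MeasureTheory intervalIntegral

theorem sum_smul_diag_le_sum_sum_Icc {M : Type*} [AddCommMonoid M] [PartialOrder M]
    [IsOrderedAddMonoid M] {n : ℕ} {a : ℕ → ℕ → M}
    (ha : ∀ i j, 1 ≤ i → i ≤ j → j ≤ n → a j j ≤ a i j) :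
    ∑ j ∈ Icc 1 n, j • a j j ≤ ∑ i ∈ Icc 1 n, ∑ j ∈ Icc i n, a i j := by
  have hswap : ∑ i ∈ Icc 1 n, ∑ j ∈ Icc i n, a i j = ∑ j ∈ Icc 1 n, ∑ i ∈ Icc 1 j, a i j :=
    sum_comm' fun i j => by simp only [mem_Icc]; omega
  rw [hswap]
  refine sum_le_sum fun j hj => ?_
  calc j • a j j = ∑ _i ∈ Icc 1 j, a j j := by rw [sum_const, Nat.card_Icc, Nat.add_sub_cancel]
    _ ≤ ∑ i ∈ Icc 1 j, a i j :=
      sum_le_sum fun i hi => ha i j (mem_Icc.1 hi).1 (mem_Icc.1 hi).2 (mem_Icc.1 hj).2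

theorem integral_eq_sum_integral_of_breakpoints {E : Type*} [NormedAddCommGroup E]
    [NormedSpace ℝ E] {f : ℝ → E} {v : ℕ → ℝ} {m N : ℕ} (hmN : m ≤ N)
    (hf : ∀ k ∈ Ico m N, IntervalIntegrable f volume (v (k + 1)) (v k)) :
    ∫ z in v N..v m, f z = ∑ k ∈ Ico m N, ∫ z in v (k + 1)..v k, f z := by
  rw [integral_symm,
    ← sum_integral_adjacent_intervals_Ico hmN fun k hk => (hf k (by simpa using hk)).symm,
    ← sum_neg_distrib]
  exact sum_congr rfl fun k _ => (integral_symm _ _).symm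

theorem IntervalIntegrable.of_measurable_of_norm_le {E : Type*} [NormedAddCommGroup E]
    {f : ℝ → E} {a b C : ℝ} (hf : StronglyMeasurable f) (hC : ∀ z ∈ Set.uIcc a b, ‖f z‖ ≤ C) :
    IntervalIntegrable f volume a b := by
  refine (intervalIntegrable_const (c := C)).mono_fun' hf.aestronglyMeasurable ?_
  filter_upwards [ae_restrict_mem measurableSet_uIoc] with z hz
  exact hC z (Set.uIoc_subset_uIcc hz)

theorem sum_mul_integral_le_sum_integral_of_antitoneOn {n : ℕ} {x : ℕ → ℝ → ℝ} {v : ℕ → ℝ}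
    (hx : ∀ z, 0 ≤ z → AntitoneOn (x · z) (Set.Icc 1 n))
    (hint : ∀ i ∈ Icc 1 n, ∀ a b, 0 ≤ a → 0 ≤ b → IntervalIntegrable (x i) volume a b)
    (hv : AntitoneOn v (Set.Icc 1 (n + 1))) (hv0 : v (n + 1) = 0) :
    ∑ i ∈ Icc 1 n, (i : ℝ) * ∫ z in v (i + 1)..v i, x i z
      ≤ ∑ i ∈ Icc 1 n, ∫ z in (0:ℝ)..v i, x i z := by
  have hv_nonneg : ∀ j, 1 ≤ j → j ≤ n + 1 → 0 ≤ v j := fun j h1 h2 =>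
    hv0 ▸ hv ⟨h1, h2⟩ ⟨by omega, le_rfl⟩ h2
  have hpiece : ∀ i ∈ Icc 1 n, ∀ j ∈ Icc 1 n,
      IntervalIntegrable (x i) volume (v (j + 1)) (v j) := fun i hi j hj => by
    obtain ⟨hj1, hjn⟩ := mem_Icc.1 hj
    exact hint i hi _ _ (hv_nonneg _ (by omega) (by omega)) (hv_nonneg _ hj1 (by omega))
  have htel : ∀ i ∈ Icc 1 n,
      ∫ z in (0:ℝ)..v i, x i z = ∑ j ∈ Icc i n, ∫ z in v (j + 1)..v j, x i z := by
    intro i hi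
    rw [← hv0, integral_eq_sum_integral_of_breakpoints (by simp at hi; omega)
      fun j hj => hpiece i hi j (by simp at hi hj ⊢; omega), Ico_add_one_right_eq_Icc]
  rw [sum_congr rfl htel]
  simp_rw [← nsmul_eq_mul]
  refine sum_smul_diag_le_sum_sum_Icc (a := fun i j => ∫ z in v (j + 1)..v j, x i z)
    fun i j hi hij hjn => ?_
  have hj : j ∈ Icc 1 n := mem_Icc.2 ⟨by omega, hjn⟩
  have hi' : i ∈ Icc 1 n := mem_Icc.2 ⟨hi, by omega⟩
  refine integral_mono_on (hv ⟨by omega, by omega⟩ ⟨by omega, by omega⟩ (by omega))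
    (hpiece j hj j hj) (hpiece i hi' j hj) fun z hz => ?_
  exact hx z (le_trans (hv_nonneg _ (by omega) (by omega)) hz.1)
    (mem_Icc.1 hi') (mem_Icc.1 hj) hij

theorem generalized_position_payment_ge_burn_general
    (n : ℕ)
    (x : ℕ → ℝ → ℝ)
    (hx_meas : ∀ i, 1 ≤ i → i ≤ n → Measurable (x i))
    (hx_mem : ∀ i, 1 ≤ i → i ≤ n → ∀ z : ℝ, 0 ≤ z → x i z ∈ Set.Icc (0:ℝ) 1)
    (hx_dec : ∀ i, 1 ≤ i → i < n → ∀ z : ℝ, 0 ≤ z → x (i+1) z ≤ x i z)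
    (v : ℕ → ℝ)
    (hv_mono : ∀ i, 1 ≤ i → i ≤ n → v (i+1) ≤ v i)
    (hv0 : v (n+1) = 0) :
    ∑ i ∈ Finset.Icc 1 n, (i:ℝ) * ∫ z in (v (i+1))..(v i), x i z
      ≤ ∑ i ∈ Finset.Icc 1 n, ∫ z in (0:ℝ)..(v i), x i z := by
  refine sum_mul_integral_le_sum_integral_of_antitoneOn (fun z hz => ?_)
    (fun i hi a b ha hb => ?_) ?_ hv0
  · exact antitoneOn_of_add_one_le Set.ordConnected_Icc fun i _ hi hi' =>
      hx_dec i hi.1 (by simpa using hi'.2) z hz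
  · obtain ⟨hi1, hin⟩ := mem_Icc.1 hi
    refine .of_measurable_of_norm_le (C := 1) (hx_meas i hi1 hin).stronglyMeasurable
      fun z hz => ?_
    obtain ⟨h0, h1⟩ := hx_mem i hi1 hin z (le_trans (le_min ha hb) hz.1)
    rwa [Real.norm_of_nonneg h0]
  · exact antitoneOn_of_add_one_le Set.ordConnected_Icc fun i _ hi hi' =>
      hv_mono i hi.1 (by simpa using hi'.2)

/-- Appendix D.2.2: payments dominate burn in generalized
position auctions. For pointwise-decreasing single-agent allocation rules
`x₁ ≥ x₂ ≥ ⋯ ≥ xₙ` with values in `[0,1]` and sorted values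
`v₁ ≥ ⋯ ≥ vₙ ≥ v_{n+1} = 0`,
`∑_{i=1}^{n} i·∫_{v_{i+1}}^{v_i} xᵢ ≤ ∑_{i=1}^{n} ∫₀^{v_i} xᵢ`. -/
theorem generalized_position_payment_ge_burn
    (n : ℕ) (hn : 1 ≤ n)
    (x : ℕ → ℝ → ℝ)
    (hx_meas : ∀ i, 1 ≤ i → i ≤ n → Measurable (x i))
    (hx_mem : ∀ i, 1 ≤ i → i ≤ n → ∀ z : ℝ, 0 ≤ z → x i z ∈ Set.Icc (0:ℝ) 1)
    (hx_dec : ∀ i, 1 ≤ i → i < n → ∀ z : ℝ, 0 ≤ z → x (i+1) z ≤ x i z)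
    (v : ℕ → ℝ)
    (hv_mono : ∀ i, 1 ≤ i → i ≤ n → v (i+1) ≤ v i)
    (hv0 : v (n+1) = 0) :
    ∑ i ∈ Finset.Icc 1 n, (i:ℝ) * ∫ z in (v (i+1))..(v i), x i z
      ≤ ∑ i ∈ Finset.Icc 1 n, ∫ z in (0:ℝ)..(v i), x i z :=
  generalized_position_payment_ge_burn_general n x hx_meas hx_mem hx_dec v hv_mono hv0
end

section
/- Let t ≤ n be positive integers, let g_t, g_{t+1}, …, g_n : ℝ → [0,∞) be functions, each integrable on bounded intervals, satisfying i·g_i(z) ≤ t·g_t(z) for every z and every t ≤ i ≤ n, and let v_{n+1} ≤ v_n ≤ ⋯ ≤ v_{t+1} ≤ w be reals. Then ∫_{v_{t+1}}^{w} t·g_t(z) dz + ∑_{i=t+1}^{n} ∫_{v_{i+1}}^{v_i} t·g_i(z) dz ≤ ∫_{v_{n+1}}^{w} t·g_t(z) dz. -/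
open MeasureTheory

/-!
On each piece `[v (i+1), v i]` the integrand `t·gᵢ` is bounded by `t·g_t`, since `t ≤ i` and
`gᵢ ≥ 0` give `t·gᵢ ≤ i·gᵢ ≤ t·g_t`. Replacing every integrand by `t·g_t`, the pieces telescope to
`∫_{v_{n+1}}^{v_{t+1}} t·g_t`, which together with `∫_{v_{t+1}}^{w} t·g_t` is the right-hand side.
-/

namespace intervalIntegral

variable {μ : Measure ℝ} {F : ℝ → ℝ} {v : ℕ → ℝ} {m n : ℕ}

theorem sum_integral_adjacent_intervals_Ico_symm (hmn : m ≤ n)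
    (hint : ∀ i ∈ Finset.Ico m n, IntervalIntegrable F μ (v (i + 1)) (v i)) :
    ∑ i ∈ Finset.Ico m n, ∫ z in v (i + 1)..v i, F z ∂μ = ∫ z in v n..v m, F z ∂μ := by
  rw [integral_symm, ← sum_integral_adjacent_intervals_Ico hmn fun i hi =>
      (hint i (Finset.mem_Ico.mpr hi)).symm,
    ← Finset.sum_neg_distrib]
  exact Finset.sum_congr rfl fun i _ => integral_symm _ _

theorem sum_integral_Ico_le_integral_of_le {f : ℕ → ℝ → ℝ} (hmn : m ≤ n)
    (hv : ∀ i ∈ Finset.Ico m n, v (i + 1) ≤ v i)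
    (hf : ∀ i ∈ Finset.Ico m n, IntervalIntegrable (f i) μ (v (i + 1)) (v i))
    (hF : ∀ i ∈ Finset.Ico m n, IntervalIntegrable F μ (v (i + 1)) (v i))
    (hfF : ∀ i ∈ Finset.Ico m n, ∀ z ∈ Set.Icc (v (i + 1)) (v i), f i z ≤ F z) :
    ∑ i ∈ Finset.Ico m n, ∫ z in v (i + 1)..v i, f i z ∂μ ≤ ∫ z in v n..v m, F z ∂μ := by
  rw [← sum_integral_adjacent_intervals_Ico_symm hmn hF]
  exact Finset.sum_le_sum fun i hi =>
    integral_mono_on (hv i hi) (hf i hi) (hF i hi) (hfF i hi)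

end intervalIntegral

theorem integral_domination_general
    (t n : ℕ) (htn : t ≤ n)
    (g : ℕ → ℝ → ℝ)
    (hg_nonneg : ∀ i, t ≤ i → i ≤ n → ∀ z : ℝ, 0 ≤ g i z)
    (hg_int : ∀ i, t ≤ i → i ≤ n → ∀ a b : ℝ, IntervalIntegrable (g i) volume a b)
    (hg_dom : ∀ i, t ≤ i → i ≤ n → ∀ z : ℝ, (i:ℝ) * g i z ≤ (t:ℝ) * g t z)
    (v : ℕ → ℝ) (w : ℝ)
    (hv_mono : ∀ i, t+1 ≤ i → i ≤ n → v (i+1) ≤ v i) :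
    (∫ z in (v (t+1))..w, (t:ℝ) * g t z)
      + ∑ i ∈ Finset.Icc (t+1) n, ∫ z in (v (i+1))..(v i), (t:ℝ) * g i z
    ≤ ∫ z in (v (n+1))..w, (t:ℝ) * g t z := by
  have hint : ∀ i, t ≤ i → i ≤ n → ∀ a b : ℝ,
      IntervalIntegrable (fun z => (t:ℝ) * g i z) volume a b :=
    fun i hti hin a b => (hg_int i hti hin a b).const_mul _
  have hpieces : ∑ i ∈ Finset.Icc (t+1) n, ∫ z in (v (i+1))..(v i), (t:ℝ) * g i z
      ≤ ∫ z in (v (n+1))..(v (t+1)), (t:ℝ) * g t z := by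
    rw [← Finset.Ico_add_one_right_eq_Icc]
    refine intervalIntegral.sum_integral_Ico_le_integral_of_le (by omega)
      (fun i hi => ?_) (fun i hi => ?_) (fun i hi => ?_) (fun i hi z _ => ?_) <;>
      obtain ⟨hti, hin⟩ := Finset.mem_Ico.mp hi
    · exact hv_mono i hti (by omega)
    · exact hint i (by omega) (by omega) _ _
    · exact hint t le_rfl htn _ _
    · have hti' : (t:ℝ) ≤ i := by exact_mod_cast (by omega : t ≤ i)
      calc (t:ℝ) * g i z ≤ i * g i z :=
            mul_le_mul_of_nonneg_right hti' (hg_nonneg i (by omega) (by omega) z)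
        _ ≤ t * g t z := hg_dom i (by omega) (by omega) z
  rw [← intervalIntegral.integral_add_adjacent_intervals (a := v (n+1)) (b := v (t+1))
    (hint t le_rfl htn _ _) (hint t le_rfl htn _ _)]
  linarith

/-- integral-domination claim in the proof of Theorem 6.11.
For nonnegative locally interval-integrable `g_t, …, g_n` with `i·gᵢ(z) ≤ t·g_t(z)`
for all `z` and `t ≤ i ≤ n`, and reals `v_{n+1} ≤ ⋯ ≤ v_{t+1} ≤ w`,
`∫_{v_{t+1}}^{w} t·g_t + ∑_{i=t+1}^{n} ∫_{v_{i+1}}^{v_i} t·gᵢ ≤ ∫_{v_{n+1}}^{w} t·g_t`. -/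
theorem integral_domination
    (t n : ℕ) (ht : 1 ≤ t) (htn : t ≤ n)
    (g : ℕ → ℝ → ℝ)
    (hg_nonneg : ∀ i, t ≤ i → i ≤ n → ∀ z : ℝ, 0 ≤ g i z)
    (hg_int : ∀ i, t ≤ i → i ≤ n → ∀ a b : ℝ, IntervalIntegrable (g i) volume a b)
    (hg_dom : ∀ i, t ≤ i → i ≤ n → ∀ z : ℝ, (i:ℝ) * g i z ≤ (t:ℝ) * g t z)
    (v : ℕ → ℝ) (w : ℝ)
    (hv_mono : ∀ i, t+1 ≤ i → i ≤ n → v (i+1) ≤ v i)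
    (hvw : v (t+1) ≤ w) :
    (∫ z in (v (t+1))..w, (t:ℝ) * g t z)
      + ∑ i ∈ Finset.Icc (t+1) n, ∫ z in (v (i+1))..(v i), (t:ℝ) * g i z
    ≤ ∫ z in (v (n+1))..w, (t:ℝ) * g t z :=
  integral_domination_general t n htn g hg_nonneg hg_int hg_dom v w hv_mono
end
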